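/- arXiv:1004.4835 — 3 statements merged into one kernel-verified Lean document; each statement's English description precedes it below -/
import Mathlib

section
/- Let p^* : T → T_L be an exact functor of triangulated categories. For all σ, τ ∈ Stab(T_L)_p one has d(p_*σ, p_*τ) ≤ d(σ, τ) in [0,∞]; in particular the pushforward map p_* : Stab(T_L)_p → Stab(T), σ ↦ p_*σ, is continuous with respect to the topologies induced by the generalized metrics. -/
/-!
The functor `p` carries a Harder–Narasimhan filtration of `E` for `p_*σ` to one of `p E` for `σ`
with the same phases and the same central charges of the factors. HN filtrations for a stability
condition are unique up to isomorphism of their factors: the factor of smallest phase is the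
universal map from `E` to an object of phase `≤ φ⁻(E)`, and one inducts on the length after
removing it. Since `φ±` and the mass are suprema over all HN filtrations, this gives
`φ±_{p_*σ}(E) = φ±_σ(p E)` and `m_{p_*σ}(E) = m_σ(p E)`, so every term of the supremum defining
`d(p_*σ, p_*τ)` occurs in the one defining `d(σ, τ)`. Continuity then follows from the triangle
inequality for `d`, which needs the middle stability condition to have positive masses
(`Real.log (x / 0) = 0` would break it).
-/

open CategoryTheory Limits Pretriangulated ENNReal

noncomputable section

namespace StabilityPaper

universe v u v₂ u₂ v₃ u₃

/-- The data of a "prestability condition": a central charge, given as a function on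
objects (which, when required to be additive on distinguished triangles, is the same
as a group homomorphism `K(T) → ℂ` on the Grothendieck group), and a collection of
sets of objects `P φ` for `φ ∈ ℝ`. -/
structure PreStab (C : Type u) where
  Z : C → ℂ
  P : ℝ → Set C

section Triangulated

variable {C : Type u} [Category.{v} C] [Preadditive C] [HasZeroObject C] [HasShift C ℤ]
  [∀ n : ℤ, (shiftFunctor C n).Additive] [Pretriangulated C] [HasFiniteBiproducts C]

/-- A Harder–Narasimhan filtration of `E` with respect to the collection of
subcategories `P`: distinguished triangles `E_{i-1} → E_i → A_i` with `E_0 = 0`,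
`E_n ≅ E`, `A_i` a nonzero object of `P (φ i)` and strictly decreasing phases `φ`. -/
structure HNFiltration (P : ℝ → Set C) (E : C) where
  n : ℕ
  npos : 0 < n
  Fil : Fin (n + 1) → C
  A : Fin n → C
  phi : Fin n → ℝ
  fil_zero : IsZero (Fil 0)
  fil_last : Nonempty (Fil (Fin.last n) ≅ E)
  A_mem : ∀ i, A i ∈ P (phi i)
  A_ne : ∀ i, ¬ IsZero (A i)
  phi_anti : StrictAnti phi
  tri : ∀ i : Fin n, ∃ (f : Fil i.castSucc ⟶ Fil i.succ) (g : Fil i.succ ⟶ A i)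
    (h : A i ⟶ (Fil i.castSucc)⟦(1 : ℤ)⟧), Triangle.mk f g h ∈ distTriang C

/-- The condition that the subcategories `P φ` are strictly full additive
subcategories. -/
structure IsSlicing (P : ℝ → Set C) : Prop where
  iso_mem : ∀ (φ : ℝ) (X Y : C), Nonempty (X ≅ Y) → X ∈ P φ → Y ∈ P φ
  zero_mem : ∀ (φ : ℝ) (X : C), IsZero X → X ∈ P φ
  sum_mem : ∀ (φ : ℝ) (X Y : C), X ∈ P φ → Y ∈ P φ → (X ⊞ Y) ∈ P φ

/-- The axioms (SC1)-(SC4) of a stability condition on a triangulated category,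
together with the requirements that the `P φ` are strictly full additive subcategories
and that `Z` is additive on distinguished triangles (i.e. descends to a group
homomorphism on the Grothendieck group). -/
structure IsStabCond (σ : PreStab C) : Prop where
  slicing : IsSlicing σ.P
  zadd : ∀ T ∈ distTriang C, σ.Z T.obj₂ = σ.Z T.obj₁ + σ.Z T.obj₃
  sc1 : ∀ (φ : ℝ) (E : C), E ∈ σ.P φ → ¬ IsZero E →
    ∃ m : ℝ, 0 < m ∧ σ.Z E = (m : ℂ) * Complex.exp ((Real.pi : ℂ) * φ * Complex.I)
  sc2 : ∀ (φ : ℝ) (E : C), (E⟦(1 : ℤ)⟧ ∈ σ.P (φ + 1)) ↔ E ∈ σ.P φ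
  sc3 : ∀ (φ₁ φ₂ : ℝ), φ₂ < φ₁ → ∀ E₁ ∈ σ.P φ₁, ∀ E₂ ∈ σ.P φ₂, ∀ f : E₁ ⟶ E₂, f = 0
  sc4 : ∀ E : C, ¬ IsZero E → Nonempty (HNFiltration σ.P E)

/-- The extension-closed subcategory generated by a set of objects. -/
inductive extClosure (S : Set C) : C → Prop
  | of {X : C} : X ∈ S → extClosure S X
  | zero {X : C} : IsZero X → extClosure S X
  | iso {X Y : C} : (X ≅ Y) → extClosure S X → extClosure S Y
  | ext (T : Triangle C) (hT : T ∈ distTriang C) (h₁ : extClosure S T.obj₁)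
      (h₃ : extClosure S T.obj₃) : extClosure S T.obj₂

/-- `A` is a strict subobject of `B` inside the subcategory `𝒜`: there is a
distinguished triangle `A → B → Q` with `Q` a nonzero object of `𝒜`. -/
def StrictSubIn (𝒜 : Set C) (A B : C) : Prop :=
  A ∈ 𝒜 ∧ B ∈ 𝒜 ∧ ∃ (f : A ⟶ B) (Q : C) (g : B ⟶ Q) (h : Q ⟶ A⟦(1 : ℤ)⟧),
    Q ∈ 𝒜 ∧ ¬ IsZero Q ∧ Triangle.mk f g h ∈ distTriang C

/-- `B` is a strict quotient of `A` inside the subcategory `𝒜`: there is a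
distinguished triangle `K → A → B` with `K` a nonzero object of `𝒜`. -/
def StrictQuotIn (𝒜 : Set C) (A B : C) : Prop :=
  A ∈ 𝒜 ∧ B ∈ 𝒜 ∧ ∃ (K : C) (f : K ⟶ A) (g : A ⟶ B) (h : B ⟶ K⟦(1 : ℤ)⟧),
    K ∈ 𝒜 ∧ ¬ IsZero K ∧ Triangle.mk f g h ∈ distTriang C

/-- A subcategory is of finite length if it is Artinian (no infinite chains of strict
subobjects) and Noetherian (no infinite chains of strict quotients). -/
def FiniteLengthIn (𝒜 : Set C) : Prop :=
  (¬ ∃ c : ℕ → C, ∀ n, StrictSubIn 𝒜 (c (n + 1)) (c n)) ∧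
  (¬ ∃ c : ℕ → C, ∀ n, StrictQuotIn 𝒜 (c n) (c (n + 1)))

/-- Local finiteness of a prestability condition. -/
def LocallyFinite (σ : PreStab C) : Prop :=
  ∃ ε : ℝ, 0 < ε ∧ ∀ φ : ℝ,
    FiniteLengthIn (setOf (extClosure (⋃ ψ ∈ Set.Ioo (φ - ε) (φ + ε), σ.P ψ)))

/-- A locally finite stability condition. -/
def IsStabilityCondition (σ : PreStab C) : Prop :=
  IsStabCond σ ∧ LocallyFinite σ

variable (C) in
/-- The set of locally finite stability conditions on `C`. -/
abbrev Stab := {σ : PreStab C // IsStabilityCondition σ}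

/-- The largest phase `φ⁺(E)` appearing in a Harder–Narasimhan filtration of `E`
(well defined, by uniqueness of Harder–Narasimhan filtrations, for a stability
condition; here defined as a supremum over all HN filtrations). -/
def phiPlus (σ : PreStab C) (E : C) : ℝ :=
  sSup {x | ∃ h : HNFiltration σ.P E, x = h.phi ⟨0, h.npos⟩}

/-- The smallest phase `φ⁻(E)` appearing in a Harder–Narasimhan filtration of `E`. -/
def phiMinus (σ : PreStab C) (E : C) : ℝ :=
  sSup {x | ∃ h : HNFiltration σ.P E, x = h.phi ⟨h.n - 1, Nat.sub_lt h.npos one_pos⟩}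

/-- The mass `m_σ(E) = ∑ |Z(A_i)|` of an object. -/
def mass (σ : PreStab C) (E : C) : ℝ :=
  sSup {x | ∃ h : HNFiltration σ.P E, x = ∑ i, ‖σ.Z (h.A i)‖}

/-- Bridgeland's generalized metric on the space of stability conditions, with values
in `[0, ∞]`. -/
def stabDist (σ τ : PreStab C) : ℝ≥0∞ :=
  ⨆ E : {E : C // ¬ IsZero E},
    ENNReal.ofReal (max |phiMinus σ E.1 - phiMinus τ E.1|
      (max |phiPlus σ E.1 - phiPlus τ E.1| |Real.log (mass σ E.1 / mass τ E.1)|))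

/-- The topology induced by the generalized metric: the topology generated by
open balls. -/
instance : TopologicalSpace (Stab C) :=
  TopologicalSpace.generateFrom
    {U | ∃ (σ : Stab C) (r : ℝ≥0∞), U = {τ : Stab C | stabDist σ.1 τ.1 < r}}

end Triangulated

section Functoriality

variable {C : Type u} [Category.{v} C] {D : Type u₂} [Category.{v₂} D]

/-- Given a functor `p : C ⥤ D` and a prestability condition `σ` on `D`, the
"pushforward" prestability condition on `C`: its central charge is `Z ∘ K(p)` and its
slicing is `P' φ = {E | p(E) ∈ P φ}`.  (When `p = p^* : D^b(X) → D^b(X_L)`, this is the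
pushforward `p_* σ` of a stability condition on `X_L`; when `p = p_* : D^b(X_L) → D^b(X)`,
this is the pullback `p^* σ` of a stability condition on `X`.) -/
def pushforward (p : C ⥤ D) (σ : PreStab D) : PreStab C where
  Z E := σ.Z (p.obj E)
  P φ := {E | p.obj E ∈ σ.P φ}

end Functoriality

section GroupAction

variable {C : Type u} [Category.{v} C] {G : Type} [Group G]

/-- The action of a group element `g` on prestability conditions:
`g • (Z, P) = (Z ∘ K(g_*), g^* P)`, where `g_* = (g⁻¹)^*` and `(g^* P)(φ)` is the
strictly full image of `P φ` under `g^*`. -/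
def gAct (gst : G → C ⥤ C) (g : G) (σ : PreStab C) : PreStab C where
  Z E := σ.Z ((gst g⁻¹).obj E)
  P φ := {E | ∃ X ∈ σ.P φ, Nonempty ((gst g).obj X ≅ E)}

/-- The cocycle condition for a `G`-linearization `lam` of an object `X`. -/
def CocycleLin (gst : G → C ⥤ C) (actMul : ∀ g h : G, gst h ⋙ gst g ≅ gst (g * h))
    (X : C) (lam : ∀ g : G, X ≅ (gst g).obj X) : Prop :=
  ∀ g h : G, (lam (g * h)).hom =
    (lam g).hom ≫ (gst g).map ((lam h).hom) ≫ (actMul g h).hom.app X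

/-- Compatibility of a morphism with `G`-linearizations of its source and target. -/
def LinHomCompat (gst : G → C ⥤ C) {X Y : C}
    (lamX : ∀ g : G, X ≅ (gst g).obj X) (lamY : ∀ g : G, Y ≅ (gst g).obj Y)
    (f : X ⟶ Y) : Prop :=
  ∀ g : G, f ≫ (lamY g).hom = (lamX g).hom ≫ (gst g).map f

/-- A function on objects which is additive on distinguished triangles; this is the
same as a group homomorphism on the Grothendieck group. -/
def AdditiveOnTriangles {C : Type u₂} [Category.{v₂} C] [Preadditive C] [HasZeroObject C]
    [HasShift C ℤ] [∀ n : ℤ, (shiftFunctor C n).Additive] [Pretriangulated C]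
    (U : C → ℂ) : Prop :=
  ∀ T ∈ distTriang C, U T.obj₂ = U T.obj₁ + U T.obj₃

/-- Bridgeland's generalized norm `‖U‖_σ` on central charges, with values in `[0,∞]`:
the supremum over nonzero `σ`-semistable objects `E` of `|U(E)|/|Z(E)|`. -/
noncomputable def stabNorm (σ : PreStab C) (U : C → ℂ) : ℝ≥0∞ :=
  ⨆ E : {E : C // ¬ IsZero E ∧ ∃ φ : ℝ, E ∈ σ.P φ},
    ENNReal.ofReal (‖U E.1‖ / ‖σ.Z E.1‖)

end GroupAction

section Descent

variable {C₁ : Type u} [Category.{v} C₁] {C₂ : Type u₂} [Category.{v₂} C₂]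
  {G : Type} [Group G]

/-- The Galois descent hypothesis: the natural functor from `T` to the category of
`G`-linearized objects of `T_L`, sending `E` to `p^* E` with its canonical
linearization, is an equivalence of categories.  This is expressed by saying that it
is fully faithful (morphisms compatible with the linearizations descend uniquely) and
essentially surjective (every `G`-linearized object is isomorphic, compatibly with the
linearizations, to some `p^* E` with its canonical linearization). -/
def GaloisDescent (pstar : C₁ ⥤ C₂) (gst : G → C₂ ⥤ C₂)
    (actMul : ∀ g h : G, gst h ⋙ gst g ≅ gst (g * h))
    (pIso : ∀ g : G, pstar ≅ pstar ⋙ gst g) : Prop :=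
  (∀ (E F : C₁) (f' : pstar.obj E ⟶ pstar.obj F),
      LinHomCompat gst (fun g => (pIso g).app E) (fun g => (pIso g).app F) f' →
      ∃! f : E ⟶ F, pstar.map f = f') ∧
  (∀ (X : C₂) (lam : ∀ g : G, X ≅ (gst g).obj X), CocycleLin gst actMul X lam →
      ∃ (E : C₁) (u : pstar.obj E ≅ X),
        LinHomCompat gst (fun g => (pIso g).app E) lam u.hom)

end Descent

lemma eq_zero_of_shift_one {C : Type u} [Category.{v} C] [Preadditive C] [HasShift C ℤ]
    [∀ n : ℤ, (shiftFunctor C n).Additive] {X W : C} (hX : ∀ f : X ⟶ W⟦(-1 : ℤ)⟧, f = 0)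
    (f : X⟦(1 : ℤ)⟧ ⟶ W) : f = 0 := by
  apply (shiftFunctor C (-1 : ℤ)).map_injective
  let e := (shiftFunctorCompIsoId C (1 : ℤ) (-1) (by simp)).app X
  rw [Functor.map_zero, ← e.hom_inv_id_assoc ((shiftFunctor C (-1)).map f), hX (e.inv ≫ _),
    comp_zero]

section HNFiltrations

variable {C : Type u} [Category.{v} C] [Preadditive C] [HasZeroObject C] [HasShift C ℤ]
  [∀ n : ℤ, (shiftFunctor C n).Additive] [Pretriangulated C]

lemma AdditiveOnTriangles.eq_zero_of_isZero {U : C → ℂ} (hU : AdditiveOnTriangles U) {W : C}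
    (hW : IsZero W) : U W = 0 := by
  have hT : Triangle.mk (0 : W ⟶ W) 0 0 ∈ distTriang C :=
    isomorphic_distinguished _ (contractible_distinguished W) _
      (Triangle.isoMk _ _ (Iso.refl W) (Iso.refl W) hW.isoZero
        (hW.eq_of_src _ _) (hW.eq_of_src _ _) (hW.eq_of_src _ _))
  exact left_eq_add.mp (hU _ hT)

lemma AdditiveOnTriangles.congr_iso {U : C → ℂ} (hU : AdditiveOnTriangles U) {X Y : C}
    (e : X ≅ Y) : U X = U Y := by
  obtain ⟨W, g, h, hT⟩ := distinguished_cocone_triangle e.hom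
  have hW : IsZero W := Triangle.isZero₃_of_isIso₁ _ hT (inferInstanceAs (IsIso e.hom))
  have hY : U Y = U X + U W := hU _ hT
  rw [hY, hU.eq_zero_of_isZero hW, add_zero]

namespace HNFiltration

variable {P : ℝ → Set C} {E : C} (h : HNFiltration P E)

def fmap (i : Fin h.n) : h.Fil i.castSucc ⟶ h.Fil i.succ := (h.tri i).choose

def gmap (i : Fin h.n) : h.Fil i.succ ⟶ h.A i := (h.tri i).choose_spec.choose

def wmap (i : Fin h.n) : h.A i ⟶ (h.Fil i.castSucc)⟦(1 : ℤ)⟧ :=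
  (h.tri i).choose_spec.choose_spec.choose

lemma triangle_distinguished (i : Fin h.n) :
    Triangle.mk (h.fmap i) (h.gmap i) (h.wmap i) ∈ distTriang C :=
  (h.tri i).choose_spec.choose_spec.choose_spec

def lastIdx : Fin h.n := ⟨h.n - 1, Nat.sub_lt h.npos one_pos⟩

lemma mk_eq_lastIdx {i : ℕ} (hi : i < h.n) (hi' : h.n ≤ i + 1) :
    (⟨i, hi⟩ : Fin h.n) = h.lastIdx :=
  Fin.ext (by simp only [lastIdx]; omega)

lemma succ_lastIdx : h.lastIdx.succ = Fin.last h.n :=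
  Fin.ext (by simp only [lastIdx, Fin.val_succ, Fin.val_last]; have := h.npos; omega)

def lastIso : h.Fil h.lastIdx.succ ≅ E :=
  eqToIso (congrArg h.Fil h.succ_lastIdx) ≪≫ h.fil_last.some

lemma hom_fil_eq_zero {W : C} (k : Fin (h.n + 1))
    (hA : ∀ i : Fin h.n, (i : ℕ) < k → ∀ f : h.A i ⟶ W, f = 0) (f : h.Fil k ⟶ W) : f = 0 := by
  induction k using Fin.induction with
  | zero => exact h.fil_zero.eq_of_src f 0
  | succ i ih =>
    have hf : h.fmap i ≫ f = 0 :=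
      ih (fun j hj => hA j (by simp only [Fin.val_succ, Fin.val_castSucc] at hj ⊢; omega)) _
    obtain ⟨g, rfl⟩ := Triangle.yoneda_exact₂ _ (h.triangle_distinguished i) f hf
    rw [hA i (by simp) g]
    exact comp_zero

def ofIso {E' : C} (e : E ≅ E') : HNFiltration P E' where
  __ := h
  fil_last := ⟨h.fil_last.some ≪≫ e⟩

def dropLast (hn : 2 ≤ h.n) : HNFiltration P (h.Fil h.lastIdx.castSucc) where
  n := h.n - 1
  npos := by omega
  Fil i := h.Fil ⟨i, by omega⟩
  A i := h.A ⟨i, by omega⟩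
  phi i := h.phi ⟨i, by omega⟩
  fil_zero := h.fil_zero
  fil_last := ⟨eqToIso (congrArg h.Fil (Fin.ext (by simp [lastIdx])))⟩
  A_mem i := h.A_mem _
  A_ne i := h.A_ne _
  phi_anti _ _ hab := h.phi_anti (Fin.mk_lt_mk.mpr hab)
  tri i := h.tri ⟨i, by omega⟩

end HNFiltration

end HNFiltrations

section Stability

variable {C : Type u} [Category.{v} C] [Preadditive C] [HasZeroObject C] [HasShift C ℤ]
  [∀ n : ℤ, (shiftFunctor C n).Additive] [Pretriangulated C] {σ : PreStab C}

lemma IsStabCond.Z_ne_zero (hσ : IsStabCond σ) {φ : ℝ} {E : C} (hE : E ∈ σ.P φ)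
    (hE₀ : ¬ IsZero E) : σ.Z E ≠ 0 := by
  obtain ⟨m, hm, hZ⟩ := hσ.sc1 φ E hE hE₀
  rw [hZ]
  exact mul_ne_zero (by exact_mod_cast hm.ne') (Complex.exp_ne_zero _)

lemma IsStabCond.shift_neg_one_mem (hσ : IsStabCond σ) {φ : ℝ} {A : C} (hA : A ∈ σ.P φ) :
    A⟦(-1 : ℤ)⟧ ∈ σ.P (φ - 1) := by
  rw [← hσ.sc2, sub_add_cancel]
  exact hσ.slicing.iso_mem φ A _ ⟨((shiftFunctorCompIsoId C (-1 : ℤ) 1 (by simp)).app A).symm⟩ hA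

namespace HNFiltration

variable (hσ : IsStabCond σ) {E : C} (h : HNFiltration σ.P E)
include hσ

lemma eq_zero_of_gmap_lastIdx_comp {B : C} {ψ : ℝ} (hB : B ∈ σ.P ψ)
    (hψ : ψ ≤ h.phi h.lastIdx) (w : h.A h.lastIdx ⟶ B)
    (hw : h.gmap h.lastIdx ≫ w = 0) : w = 0 := by
  obtain ⟨g, rfl⟩ := Triangle.yoneda_exact₂ _
    (rot_of_distTriang _ (h.triangle_distinguished h.lastIdx)) w hw
  have hFil : ∀ f : h.Fil h.lastIdx.castSucc ⟶ B⟦(-1 : ℤ)⟧, f = 0 :=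
    h.hom_fil_eq_zero _ fun i _ f => hσ.sc3 _ _ (by
      have := h.phi_anti.antitone (Fin.le_def.mpr (by simp only [lastIdx]; omega) : i ≤ h.lastIdx)
      linarith) _ (h.A_mem i) _ (hσ.shift_neg_one_mem hB) f
  rw [eq_zero_of_shift_one hFil g]
  exact comp_zero

lemma exists_eq_gmap_lastIdx_comp {B : C} {ψ : ℝ} (hB : B ∈ σ.P ψ)
    (hψ : ψ ≤ h.phi h.lastIdx) (f : h.Fil h.lastIdx.succ ⟶ B) :
    ∃ r : h.A h.lastIdx ⟶ B, f = h.gmap h.lastIdx ≫ r :=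
  Triangle.yoneda_exact₂ _ (h.triangle_distinguished h.lastIdx) f <|
    h.hom_fil_eq_zero _ (fun i hi f => hσ.sc3 _ _ (by
      have := h.phi_anti (show i < h.lastIdx from hi)
      linarith) _ (h.A_mem i) _ hB f) _

lemma gmap_lastIdx_ne_zero : h.gmap h.lastIdx ≠ 0 := fun h₀ =>
  h.A_ne h.lastIdx <| (IsZero.iff_id_eq_zero _).mpr <|
    h.eq_zero_of_gmap_lastIdx_comp hσ (h.A_mem _) le_rfl _ (by rw [h₀, zero_comp])

lemma not_isZero (h : HNFiltration σ.P E) : ¬ IsZero E := fun hE =>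
  h.gmap_lastIdx_ne_zero hσ ((hE.of_iso h.lastIso).eq_of_src _ _)

lemma isZero_fil_castSucc_lastIdx_iff : IsZero (h.Fil h.lastIdx.castSucc) ↔ h.n = 1 := by
  refine ⟨fun hZ => ?_, fun hn => ?_⟩
  · by_contra hn
    exact (h.dropLast (by have := h.npos; omega)).not_isZero hσ hZ
  · rw [show h.lastIdx.castSucc = 0 from Fin.ext (by simp [lastIdx, hn])]
    exact h.fil_zero

lemma phi_lastIdx_le (h' : HNFiltration σ.P E) : h.phi h.lastIdx ≤ h'.phi h'.lastIdx := by
  by_contra! hlt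
  have hv : ∀ v : h.Fil h.lastIdx.succ ⟶ h'.A h'.lastIdx, v = 0 :=
    h.hom_fil_eq_zero _ fun i _ v => hσ.sc3 _ _ (hlt.trans_le (h.phi_anti.antitone
      (Fin.le_def.mpr (by simp only [lastIdx]; omega)))) _ (h.A_mem i) _ (h'.A_mem _) v
  let e := h'.lastIso ≪≫ h.lastIso.symm
  apply h'.gmap_lastIdx_ne_zero hσ
  rw [← e.hom_inv_id_assoc (h'.gmap h'.lastIdx), hv (e.inv ≫ _), comp_zero]

lemma phi_lastIdx_eq (h' : HNFiltration σ.P E) : h.phi h.lastIdx = h'.phi h'.lastIdx :=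
  le_antisymm (h.phi_lastIdx_le hσ h') (h'.phi_lastIdx_le hσ h)

lemma nonempty_iso_lastIdx (h' : HNFiltration σ.P E) :
    Nonempty (h.A h.lastIdx ≅ h'.A h'.lastIdx) ∧
      Nonempty (h.Fil h.lastIdx.castSucc ≅ h'.Fil h'.lastIdx.castSucc) := by
  have hφ := h.phi_lastIdx_eq hσ h'
  let u := h.lastIso ≪≫ h'.lastIso.symm
  obtain ⟨r, hr⟩ := h.exists_eq_gmap_lastIdx_comp hσ (h'.A_mem _) hφ.ge
    (u.hom ≫ h'.gmap h'.lastIdx)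
  obtain ⟨r', hr'⟩ := h'.exists_eq_gmap_lastIdx_comp hσ (h.A_mem _) hφ.le
    (u.inv ≫ h.gmap h.lastIdx)
  have hrr' : r ≫ r' = 𝟙 _ := sub_eq_zero.mp <|
    h.eq_zero_of_gmap_lastIdx_comp hσ (h.A_mem _) le_rfl _ <| by
      rw [Preadditive.comp_sub, ← Category.assoc, ← hr, Category.assoc, ← hr',
        u.hom_inv_id_assoc, Category.comp_id, sub_self]
  have hr'r : r' ≫ r = 𝟙 _ := sub_eq_zero.mp <|
    h'.eq_zero_of_gmap_lastIdx_comp hσ (h'.A_mem _) le_rfl _ <| by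
      rw [Preadditive.comp_sub, ← Category.assoc, ← hr', Category.assoc, ← hr,
        u.inv_hom_id_assoc, Category.comp_id, sub_self]
  let e : h.A h.lastIdx ≅ h'.A h'.lastIdx := ⟨r, r', hrr', hr'r⟩
  refine ⟨⟨e⟩, ⟨(shiftFunctor C (1 : ℤ)).preimageIso (Triangle.π₃.mapIso <|
    isoTriangleOfIso₁₂ _ _ (rot_of_distTriang _ (h.triangle_distinguished _))
      (rot_of_distTriang _ (h'.triangle_distinguished _)) u e hr.symm)⟩⟩

theorem unique (h' : HNFiltration σ.P E) :
    h.n = h'.n ∧ ∀ (i : ℕ) (hi : i < h.n) (hi' : i < h'.n),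
      h.phi ⟨i, hi⟩ = h'.phi ⟨i, hi'⟩ ∧ Nonempty (h.A ⟨i, hi⟩ ≅ h'.A ⟨i, hi'⟩) := by
  obtain ⟨N, hN⟩ : ∃ N, h.n = N + 1 := ⟨h.n - 1, by have := h.npos; omega⟩
  induction N generalizing E with
  | zero =>
    obtain ⟨⟨eA⟩, ⟨eF⟩⟩ := h.nonempty_iso_lastIdx hσ h'
    have hn' : h'.n = 1 := (h'.isZero_fil_castSucc_lastIdx_iff hσ).mp
      (((h.isZero_fil_castSucc_lastIdx_iff hσ).mpr hN).of_iso eF.symm)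
    refine ⟨by omega, fun i hi hi' => ?_⟩
    rw [h.mk_eq_lastIdx hi (by omega), h'.mk_eq_lastIdx hi' (by omega)]
    exact ⟨h.phi_lastIdx_eq hσ h', ⟨eA⟩⟩
  | succ N ih =>
    obtain ⟨⟨eA⟩, ⟨eF⟩⟩ := h.nonempty_iso_lastIdx hσ h'
    have hn' : 2 ≤ h'.n := by
      by_contra! hn'
      have hZ := (h'.isZero_fil_castSucc_lastIdx_iff hσ).mpr (by have := h'.npos; omega)
      have := (h.isZero_fil_castSucc_lastIdx_iff hσ).mp (hZ.of_iso eF)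
      omega
    obtain ⟨hn, hlow⟩ := ih (h.dropLast (by omega)) ((h'.dropLast hn').ofIso eF.symm)
      (show h.n - 1 = N + 1 by omega)
    replace hn : h.n - 1 = h'.n - 1 := hn
    refine ⟨by omega, fun i hi hi' => ?_⟩
    by_cases hlast : h.n ≤ i + 1
    · rw [h.mk_eq_lastIdx hi hlast, h'.mk_eq_lastIdx hi' (by omega)]
      exact ⟨h.phi_lastIdx_eq hσ h', ⟨eA⟩⟩
    · exact hlow i (show i < h.n - 1 by omega) (show i < h'.n - 1 by omega)

end HNFiltration

end Stability

lemma csSup_setOf_exists_eq {ι : Sort*} (f : ι → ℝ) (i₀ : ι) (hf : ∀ i, f i = f i₀) :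
    sSup {x | ∃ i, x = f i} = f i₀ := by
  rw [show {x | ∃ i, x = f i} = {f i₀} from
    Set.ext fun x => ⟨fun ⟨i, hi⟩ => hi.trans (hf i), fun hx => ⟨i₀, hx⟩⟩, csSup_singleton]

section Invariants

variable {C : Type u} [Category.{v} C] [Preadditive C] [HasZeroObject C] [HasShift C ℤ]
  [∀ n : ℤ, (shiftFunctor C n).Additive] [Pretriangulated C] {σ : PreStab C}
  (hσ : IsStabCond σ) {E : C} (h : HNFiltration σ.P E)
include hσ

lemma phiPlus_eq : phiPlus σ E = h.phi ⟨0, h.npos⟩ :=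
  csSup_setOf_exists_eq (fun h' : HNFiltration σ.P E => h'.phi ⟨0, h'.npos⟩) h
    fun h' => ((h'.unique hσ h).2 0 _ _).1

lemma phiMinus_eq : phiMinus σ E = h.phi h.lastIdx :=
  csSup_setOf_exists_eq (fun h' : HNFiltration σ.P E => h'.phi h'.lastIdx) h fun h' => by
    obtain ⟨hn, hφ⟩ := h'.unique hσ h
    have := (hφ _ h'.lastIdx.2 (hn ▸ h'.lastIdx.2)).1
    rwa [h.mk_eq_lastIdx _ (by simp only [HNFiltration.lastIdx]; omega)] at this

lemma mass_eq : mass σ E = ∑ i, ‖σ.Z (h.A i)‖ :=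
  csSup_setOf_exists_eq (fun h' : HNFiltration σ.P E => ∑ i, ‖σ.Z (h'.A i)‖) h fun h' => by
    obtain ⟨hn, hA⟩ := h'.unique hσ h
    exact Fintype.sum_equiv (finCongr hn) _ _ fun i =>
      congrArg norm (AdditiveOnTriangles.congr_iso hσ.zadd (hA i i.2 (hn ▸ i.2)).2.some)

lemma mass_pos (hE : ¬ IsZero E) : 0 < mass σ E := by
  obtain ⟨h⟩ := hσ.sc4 E hE
  rw [mass_eq hσ h]
  have : Nonempty (Fin h.n) := ⟨⟨0, h.npos⟩⟩
  exact Finset.sum_pos (fun i _ => norm_pos_iff.mpr (hσ.Z_ne_zero (h.A_mem i) (h.A_ne i)))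
    Finset.univ_nonempty

end Invariants

lemma abs_log_div_le_add {a b c : ℝ} (hb : b ≠ 0) :
    |Real.log (a / c)| ≤ |Real.log (a / b)| + |Real.log (b / c)| := by
  rcases eq_or_ne a 0 with rfl | ha
  · simp only [zero_div, Real.log_zero, abs_zero]
    positivity
  rcases eq_or_ne c 0 with rfl | hc
  · simp only [_root_.div_zero, Real.log_zero, abs_zero]
    positivity
  rw [← div_mul_div_cancel₀ hb, Real.log_mul (div_ne_zero ha hb) (div_ne_zero hb hc)]
  exact abs_add_le _ _

section Distance

variable {C : Type u} [Category.{v} C] [Preadditive C] [HasZeroObject C] [HasShift C ℤ]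
  [∀ n : ℤ, (shiftFunctor C n).Additive] [Pretriangulated C]

def stabDistAt (σ τ : PreStab C) (E : C) : ℝ :=
  max |phiMinus σ E - phiMinus τ E|
    (max |phiPlus σ E - phiPlus τ E| |Real.log (mass σ E / mass τ E)|)

lemma stabDist_self (σ : PreStab C) : stabDist σ σ = 0 := by
  refine le_antisymm (iSup_le fun E => ?_) zero_le
  rcases eq_or_ne (mass σ E.1) 0 with h | h <;> simp [h]

lemma stabDistAt_triangle (ρ₁ ρ₂ ρ₃ : PreStab C) {E : C} (hm : mass ρ₂ E ≠ 0) :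
    stabDistAt ρ₁ ρ₃ E ≤ stabDistAt ρ₁ ρ₂ E + stabDistAt ρ₂ ρ₃ E :=
  calc stabDistAt ρ₁ ρ₃ E
      ≤ max (|phiMinus ρ₁ E - phiMinus ρ₂ E| + |phiMinus ρ₂ E - phiMinus ρ₃ E|)
          (max (|phiPlus ρ₁ E - phiPlus ρ₂ E| + |phiPlus ρ₂ E - phiPlus ρ₃ E|)
            (|Real.log (mass ρ₁ E / mass ρ₂ E)| + |Real.log (mass ρ₂ E / mass ρ₃ E)|)) := by
        unfold stabDistAt
        gcongr
        exacts [abs_sub_le _ _ _, abs_sub_le _ _ _, abs_log_div_le_add hm]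
    _ ≤ stabDistAt ρ₁ ρ₂ E + stabDistAt ρ₂ ρ₃ E :=
      (max_le_max le_rfl max_add_add_le_max_add_max).trans max_add_add_le_max_add_max

lemma stabDist_triangle (ρ₁ ρ₂ ρ₃ : PreStab C) (hm : ∀ E : C, ¬ IsZero E → mass ρ₂ E ≠ 0) :
    stabDist ρ₁ ρ₃ ≤ stabDist ρ₁ ρ₂ + stabDist ρ₂ ρ₃ :=
  iSup_le fun E => (ENNReal.ofReal_le_ofReal (stabDistAt_triangle ρ₁ ρ₂ ρ₃ (hm E.1 E.2))).trans <|
    ENNReal.ofReal_add_le.trans (add_le_add (le_iSup_of_le E le_rfl) (le_iSup_of_le E le_rfl))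

lemma isOpen_setOf_stabDist_lt (σ : Stab C) (r : ℝ≥0∞) :
    IsOpen {τ : Stab C | stabDist σ.1 τ.1 < r} :=
  TopologicalSpace.isOpen_generateFrom_of_mem ⟨σ, r, rfl⟩

end Distance

section Pushforward

variable {C : Type u} [Category.{v} C] [Preadditive C] [HasZeroObject C] [HasShift C ℤ]
  [∀ n : ℤ, (shiftFunctor C n).Additive] [Pretriangulated C]
  {D : Type u₂} [Category.{v₂} D] [Preadditive D] [HasZeroObject D] [HasShift D ℤ]
  [∀ n : ℤ, (shiftFunctor D n).Additive] [Pretriangulated D]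
  (p : C ⥤ D) [p.CommShift ℤ] [p.IsTriangulated] {σ : PreStab D}

def HNFiltration.map (hZ : AdditiveOnTriangles σ.Z) (hσp : IsStabCond (pushforward p σ))
    {E : C} (h : HNFiltration (pushforward p σ).P E) : HNFiltration σ.P (p.obj E) where
  n := h.n
  npos := h.npos
  Fil k := p.obj (h.Fil k)
  A i := p.obj (h.A i)
  phi := h.phi
  fil_zero := p.map_isZero h.fil_zero
  fil_last := ⟨p.mapIso h.fil_last.some⟩
  A_mem := h.A_mem
  A_ne i hA := hσp.Z_ne_zero (h.A_mem i) (h.A_ne i) (hZ.eq_zero_of_isZero hA)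
  phi_anti := h.phi_anti
  tri i := by
    obtain ⟨f, g, w, hT⟩ := h.tri i
    exact ⟨p.map f, p.map g, p.map w ≫ (p.commShiftIso (1 : ℤ)).hom.app _,
      p.map_distinguished _ hT⟩

variable {p}

section

variable (hσ : IsStabCond σ) (hσp : IsStabCond (pushforward p σ)) {E : C} (hE : ¬ IsZero E)
include hσ hσp hE

lemma not_isZero_obj : ¬ IsZero (p.obj E) :=
  ((hσp.sc4 E hE).some.map p hσ.zadd hσp).not_isZero hσ

lemma phiPlus_pushforward : phiPlus (pushforward p σ) E = phiPlus σ (p.obj E) :=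
  let h := (hσp.sc4 E hE).some
  (phiPlus_eq hσp h).trans (phiPlus_eq hσ (h.map p hσ.zadd hσp)).symm

lemma phiMinus_pushforward : phiMinus (pushforward p σ) E = phiMinus σ (p.obj E) :=
  let h := (hσp.sc4 E hE).some
  (phiMinus_eq hσp h).trans (phiMinus_eq hσ (h.map p hσ.zadd hσp)).symm

lemma mass_pushforward : mass (pushforward p σ) E = mass σ (p.obj E) :=
  let h := (hσp.sc4 E hE).some
  (mass_eq hσp h).trans (mass_eq hσ (h.map p hσ.zadd hσp)).symm

end

lemma stabDist_pushforward_le {σ τ : PreStab D} (hσ : IsStabCond σ) (hτ : IsStabCond τ)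
    (hσp : IsStabCond (pushforward p σ)) (hτp : IsStabCond (pushforward p τ)) :
    stabDist (pushforward p σ) (pushforward p τ) ≤ stabDist σ τ :=
  iSup_le fun ⟨E, hE⟩ => calc
    ENNReal.ofReal (stabDistAt (pushforward p σ) (pushforward p τ) E)
        = ENNReal.ofReal (stabDistAt σ τ (p.obj E)) := by
      simp only [stabDistAt, phiPlus_pushforward hσ hσp hE, phiPlus_pushforward hτ hτp hE,
        phiMinus_pushforward hσ hσp hE, phiMinus_pushforward hτ hτp hE,
        mass_pushforward hσ hσp hE, mass_pushforward hτ hτp hE]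
    _ ≤ stabDist σ τ := le_iSup_of_le ⟨p.obj E, not_isZero_obj hσ hσp hE⟩ le_rfl

lemma continuous_pushforward :
    Continuous (fun σ : {σ : Stab D // IsStabilityCondition (pushforward p σ.1)} =>
      (⟨pushforward p σ.1.1, σ.2⟩ : Stab C)) := by
  refine continuous_generateFrom_iff.mpr ?_
  rintro _ ⟨ρ, r, rfl⟩
  refine isOpen_iff_forall_mem_open.mpr fun σ₀ h₀ => ?_
  replace h₀ : stabDist ρ.1 (pushforward p σ₀.1.1) < r := h₀
  set d₀ := stabDist ρ.1 (pushforward p σ₀.1.1)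
  refine ⟨Subtype.val ⁻¹' {τ : Stab D | stabDist σ₀.1.1 τ.1 < r - d₀}, fun σ hσ => ?_,
    (isOpen_setOf_stabDist_lt σ₀.1 _).preimage continuous_subtype_val,
    by simpa [stabDist_self] using h₀⟩
  calc stabDist ρ.1 (pushforward p σ.1.1)
      ≤ d₀ + stabDist (pushforward p σ₀.1.1) (pushforward p σ.1.1) :=
        stabDist_triangle _ _ _ fun E hE => (mass_pos σ₀.2.1 hE).ne'
    _ ≤ d₀ + stabDist σ₀.1.1 σ.1.1 := by
        gcongr
        exact stabDist_pushforward_le σ₀.1.2.1 σ.1.2.1 σ₀.2.1 σ.2.1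
    _ < d₀ + (r - d₀) := ENNReal.add_lt_add_left h₀.ne_top hσ
    _ = r := add_tsub_cancel_of_le h₀.le

end Pushforward

/-- Let `p^* : T → T_L` be an exact functor of triangulated
categories.  For all `σ, τ ∈ Stab(T_L)_p` one has `d(p_* σ, p_* τ) ≤ d(σ, τ)` in
`[0, ∞]`; in particular the pushforward map `p_* : Stab(T_L)_p → Stab(T)` is
continuous with respect to the topologies induced by the generalized metrics. -/
theorem statement_0
    {C : Type u} [Category.{v} C] [Preadditive C] [HasZeroObject C] [HasShift C ℤ]
    [∀ n : ℤ, (shiftFunctor C n).Additive] [Pretriangulated C] [HasFiniteBiproducts C]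
    {D : Type u₂} [Category.{v₂} D] [Preadditive D] [HasZeroObject D] [HasShift D ℤ]
    [∀ n : ℤ, (shiftFunctor D n).Additive] [Pretriangulated D] [HasFiniteBiproducts D]
    (p : C ⥤ D) [p.CommShift ℤ] [p.IsTriangulated] :
    (∀ σ τ : Stab D, IsStabilityCondition (pushforward p σ.1) →
      IsStabilityCondition (pushforward p τ.1) →
      stabDist (pushforward p σ.1) (pushforward p τ.1) ≤ stabDist σ.1 τ.1) ∧
    Continuous (fun σ : {σ : Stab D // IsStabilityCondition (pushforward p σ.1)} =>
      (⟨pushforward p σ.1.1, σ.2⟩ : Stab C)) :=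
  ⟨fun σ τ hσp hτp => stabDist_pushforward_le σ.2.1 τ.2.1 hσp.1 hτp.1, continuous_pushforward⟩

end StabilityPaper
end
end

section
/- Let C and D be abelian categories, p^* : C → D an exact and faithful functor, p_* : D → C an exact functor, and G a finite group of order d acting on D by exact autoequivalences g^*, with natural isomorphisms p_*∘p^* ≅ (−)^{⊕d} and p^*∘p_* ≅ ⊕_{g∈G} g^*. Let Z be a stability function on D with the Harder–Narasimhan property such that for every φ ∈ (0,1] the class of Z-semistable objects of phase φ is preserved by every g^*. Then Z∘p^* is a stability function on C, and a nonzero object E of C is (Z∘p^*)-semistable if and only if p^*E is Z-semistable; in that case the phase of E with respect to Z∘p^* equals the phase of p^*E with respect to Z. -/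
/-!
If `E` is `(Z ∘ p^*)`-semistable, let `A ⊆ p^* E` be the first Harder–Narasimhan factor of
`p^* E`: it is semistable and `Z` of every subobject of `p^* E` lies in the sector
`{0} ∪ {0 < arg ≤ arg Z(A)}`. Since `p_*` is left exact, `p_* A` is a subobject of
`p_* p^* E ≅ E^{⊕d}`, and `Z ∘ p^*` of every subobject of `E^{⊕d}` lies in the sector of
opening `arg Z(p^* E)`, because such sectors are closed under addition and hence the property
is closed under extensions. On the other hand `p^* p_* A ≅ ⊕_g g^* A` is a sum of values of `Z`
on the same ray as `Z(A)`. Comparing both gives `φ(A) ≤ φ(p^* E)`, so `p^* E` is semistable.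
-/

open CategoryTheory Limits

noncomputable section

namespace StabilityPaper

universe v u v₂ u₂

section AbelianStability

variable {A : Type u} [Category.{v} A] [Abelian A]

/-- A stability function on an abelian category: a function on objects which is
additive on short exact sequences (equivalently, a group homomorphism `K(A) → ℂ`)
such that every nonzero object is sent into the semi-closed upper half plane
`H = {r · exp(iπφ) : r > 0, 0 < φ ≤ 1}`. -/
def IsStabilityFunction (Z : A → ℂ) : Prop :=
  (∀ S : ShortComplex A, S.ShortExact → Z S.X₂ = Z S.X₁ + Z S.X₃) ∧
  (∀ E : A, ¬ IsZero E → ∃ r φ : ℝ, 0 < r ∧ 0 < φ ∧ φ ≤ 1 ∧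
    Z E = (r : ℂ) * Complex.exp ((Real.pi : ℂ) * φ * Complex.I))

/-- The phase `φ(E) = (1/π) arg Z(E) ∈ (0, 1]` of a nonzero object. -/
def phase (Z : A → ℂ) (E : A) : ℝ := (Z E).arg / Real.pi

/-- A nonzero object `E` is `Z`-semistable if `φ(X) ≤ φ(E)` for every nonzero
subobject `X ⊆ E`. -/
def IsSemistable (Z : A → ℂ) (E : A) : Prop :=
  ¬ IsZero E ∧ ∀ (X : A) (f : X ⟶ E), Mono f → ¬ IsZero X → phase Z X ≤ phase Z E

/-- A Harder–Narasimhan filtration `0 = E₀ ⊂ E₁ ⊂ ⋯ ⊂ Eₙ = E` with nonzero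
`Z`-semistable quotients of strictly decreasing phases. -/
structure HNFiltAb (Z : A → ℂ) (E : A) where
  n : ℕ
  npos : 0 < n
  Fil : Fin (n + 1) → A
  f : ∀ i : Fin n, Fil i.castSucc ⟶ Fil i.succ
  mono : ∀ i, Mono (f i)
  fil_zero : IsZero (Fil 0)
  fil_last : Nonempty (Fil (Fin.last n) ≅ E)
  quot_ne : ∀ i, ¬ IsZero (cokernel (f i))
  quot_ss : ∀ i, IsSemistable Z (cokernel (f i))
  quot_anti : StrictAnti fun i => phase Z (cokernel (f i))

/-- The Harder–Narasimhan property for a stability function. -/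
def HNProperty (Z : A → ℂ) : Prop := ∀ E : A, ¬ IsZero E → Nonempty (HNFiltAb Z E)

/-- The chain conditions of Bridgeland: no infinite chains of subobjects with
strictly increasing phases, and no infinite chains of quotients with strictly
decreasing phases. -/
def ChainConditions (Z : A → ℂ) : Prop :=
  (¬ ∃ (E : ℕ → A) (f : ∀ n : ℕ, E (n + 1) ⟶ E n),
    (∀ n, Mono (f n)) ∧ (∀ n, ¬ IsZero (E n)) ∧
      ∀ n, phase Z (E n) < phase Z (E (n + 1))) ∧
  (¬ ∃ (E : ℕ → A) (f : ∀ n : ℕ, E n ⟶ E (n + 1)),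
    (∀ n, Epi (f n)) ∧ (∀ n, ¬ IsZero (E n)) ∧
      ∀ n, phase Z (E (n + 1)) < phase Z (E n))

end AbelianStability

attribute [local instance] CategoryTheory.Limits.HasFiniteBiproducts.of_hasFiniteProducts

-- For `0 < a ≤ π` this is `{0} ∪ {w | 0 < arg w ≤ a}` (`mem_upperSector_iff`); the description
-- by linear inequalities makes closure under addition evident.
def upperSector (a : ℝ) : AddSubmonoid ℂ where
  carrier := {w | 0 ≤ w.im ∧ (w.im = 0 → w.re ≤ 0) ∧ w.im * Real.cos a ≤ w.re * Real.sin a}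
  add_mem' := by
    rintro w₁ w₂ ⟨him₁, hre₁, hsec₁⟩ ⟨him₂, hre₂, hsec₂⟩
    show _ ∧ _ ∧ _
    simp only [Complex.add_im, Complex.add_re]
    refine ⟨by linarith, fun h => ?_, by linarith⟩
    linarith [hre₁ (by linarith), hre₂ (by linarith)]
  zero_mem' := by simp

theorem mem_upperSector_iff {a : ℝ} (ha : 0 < a) (haπ : a ≤ Real.pi) {w : ℂ} (hw : w ≠ 0) :
    w ∈ upperSector a ↔ 0 < w.arg ∧ w.arg ≤ a := by
  have hsec : w.im * Real.cos a ≤ w.re * Real.sin a ↔ ‖w‖ * Real.sin (w.arg - a) ≤ 0 := by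
    rw [← Complex.norm_mul_cos_arg, ← Complex.norm_mul_sin_arg, Real.sin_sub]
    constructor <;> intro h <;> nlinarith
  have hnorm : 0 < ‖w‖ := norm_pos_iff.mpr hw
  have harg_le := Complex.arg_le_pi w
  change _ ∧ _ ∧ _ ↔ _
  rw [hsec, ← Complex.arg_nonneg_iff]
  constructor
  · rintro ⟨hnonneg, hre, hsin⟩
    have harg_ne : w.arg ≠ 0 := fun h0 => by
      obtain ⟨hre0, him0⟩ := Complex.arg_eq_zero_iff.mp h0
      exact hw (Complex.ext (le_antisymm (hre him0) hre0) him0)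
    refine ⟨hnonneg.lt_of_ne' harg_ne, not_lt.mp fun hlt => ?_⟩
    have := Real.sin_pos_of_pos_of_lt_pi (sub_pos.mpr hlt) (by linarith)
    nlinarith
  · rintro ⟨hpos, hle⟩
    refine ⟨hpos.le, fun him => ?_, ?_⟩
    · by_contra! hre
      exact hpos.ne' (Complex.arg_eq_zero_iff.mpr ⟨hre.le, him⟩)
    · exact mul_nonpos_of_nonneg_of_nonpos hnorm.le
        (Real.sin_nonpos_of_nonpos_of_neg_pi_le (by linarith) (by linarith))

def sameRaySubmonoid (u : ℂ) : AddSubmonoid ℂ where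
  carrier := {w | SameRay ℝ w u}
  add_mem' := SameRay.add_left
  zero_mem' := SameRay.zero_left u

theorem _root_.CategoryTheory.Functor.isZero_of_isZero_obj {C D : Type*} [Category C]
    [Category D] [HasZeroMorphisms C] [HasZeroMorphisms D] (F : C ⥤ D)
    [F.PreservesZeroMorphisms] [F.Faithful] {X : C} (hX : IsZero (F.obj X)) : IsZero X := by
  rw [IsZero.iff_id_eq_zero, ← F.map_eq_zero_iff, F.map_id]
  exact hX.eq_of_src _ _

section Additive

open ZeroObject

variable {A : Type u} [Category.{v} A] [Abelian A]

theorem _root_.CategoryTheory.ObjectProperty.isClosedUnderBinaryProducts_of_isClosedUnderExtensions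
    (P : ObjectProperty A) [P.IsClosedUnderExtensions] [P.IsClosedUnderIsomorphisms] :
    P.IsClosedUnderBinaryProducts where
  limitsOfShape_le := by
    rintro X ⟨p⟩
    refine P.prop_of_iso ?_ (P.prop_biprod (p.prop_diag_obj (.mk .left))
      (p.prop_diag_obj (.mk .right)))
    exact (biprod.isoProd _ _).trans (IsLimit.conePointUniqueUpToIso (prodIsProd _ _)
      ((IsLimit.postcomposeHomEquiv (diagramIsoPair p.diag) _).2 p.isLimit))

theorem _root_.CategoryTheory.ObjectProperty.prop_biproduct (P : ObjectProperty A)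
    [P.IsClosedUnderExtensions] [P.ContainsZero] [P.IsClosedUnderIsomorphisms] {J : Type}
    [Finite J] (f : J → A) (h : ∀ j, P (f j)) : P (⨁ f) := by
  have := P.isClosedUnderBinaryProducts_of_isClosedUnderExtensions
  have : P.IsClosedUnderFiniteProducts := .mk'
  exact P.prop_of_iso (biproduct.isoProduct f).symm (P.prop_product h)

def IsAdditive (Z : A → ℂ) : Prop :=
  ∀ S : ShortComplex A, S.ShortExact → Z S.X₂ = Z S.X₁ + Z S.X₃

theorem IsStabilityFunction.isAdditive {Z : A → ℂ} (hZ : IsStabilityFunction Z) :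
    IsAdditive Z :=
  hZ.1

def valueIn (Z : A → ℂ) (S : AddSubmonoid ℂ) : ObjectProperty A := fun X => Z X ∈ S

def subobjectsIn (Z : A → ℂ) (S : AddSubmonoid ℂ) : ObjectProperty A :=
  fun B => ∀ ⦃X : A⦄ (u : X ⟶ B), Mono u → Z X ∈ S

instance (Z : A → ℂ) (S : AddSubmonoid ℂ) : (subobjectsIn Z S).IsClosedUnderIsomorphisms where
  of_iso e hB _ u _ := hB (u ≫ e.inv) inferInstance

namespace IsAdditive

variable {Z : A → ℂ} (hZ : IsAdditive Z)
include hZ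

theorem eq_zero_of_isZero {O : A} (hO : IsZero O) : Z O = 0 := by
  have hS : (ShortComplex.mk (𝟙 O) (𝟙 O) (hO.eq_of_src _ _)).ShortExact :=
    { exact := ShortComplex.exact_of_isZero_X₂ _ hO }
  linear_combination -hZ _ hS

theorem eq_of_iso {X Y : A} (e : X ≅ Y) : Z X = Z Y := by
  have hS := (ShortComplex.Splitting.ofIsZeroOfIsIso
    (ShortComplex.mk (0 : 0 ⟶ X) e.hom zero_comp) (isZero_zero A) inferInstance).shortExact
  rw [hZ _ hS]
  simp [hZ.eq_zero_of_isZero (isZero_zero A)]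

theorem eq_add_cokernel {X Y : A} (f : X ⟶ Y) [Mono f] : Z Y = Z X + Z (cokernel f) :=
  hZ (ShortComplex.mk f (cokernel.π f) (cokernel.condition f))
    { exact := ShortComplex.exact_of_g_is_cokernel _ (cokernelIsCokernel f) }

theorem valueIn_biproduct (S : AddSubmonoid ℂ) {J : Type} [Finite J] (f : J → A)
    (h : ∀ j, Z (f j) ∈ S) : Z (⨁ f) ∈ S := by
  have : (valueIn Z S).IsClosedUnderExtensions :=
    ⟨fun hS h₁ h₃ => by simpa only [valueIn, hZ _ hS] using S.add_mem h₁ h₃⟩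
  have : (valueIn Z S).ContainsZero :=
    ⟨⟨0, isZero_zero A, by simp [valueIn, hZ.eq_zero_of_isZero (isZero_zero A)]⟩⟩
  have : (valueIn Z S).IsClosedUnderIsomorphisms :=
    ⟨fun e hX => by simpa only [valueIn, hZ.eq_of_iso e] using hX⟩
  exact (valueIn Z S).prop_biproduct f h

-- A subobject `X` of the middle term meets `S.X₁` in `kernel (u ≫ S.g)` and has image
-- `X / (X ∩ S.X₁)` in `S.X₃`.
theorem subobjectsIn_isClosedUnderExtensions (S : AddSubmonoid ℂ) :
    (subobjectsIn Z S).IsClosedUnderExtensions where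
  prop_X₂_of_shortExact {T} hT h₁ h₃ X u _ := by
    let g := u ≫ T.g
    obtain ⟨k, hk⟩ := KernelFork.IsLimit.lift' hT.fIsKernel (kernel.ι g ≫ u)
      (by simp [g, kernel.condition])
    simp only [Fork.ι_ofι] at hk
    have : Mono k := by
      have : Mono (k ≫ T.f) := by rw [hk]; exact mono_comp _ _
      exact mono_of_mono k T.f
    have hker : Z (kernel g) ∈ S := h₁ k inferInstance
    have him : Z (Abelian.coimage g) ∈ S := by
      rw [hZ.eq_of_iso (Abelian.coimageIsoImage g)]
      exact h₃ (Abelian.image.ι g) inferInstance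
    rw [hZ.eq_add_cokernel (kernel.ι g)]
    exact S.add_mem hker him

theorem subobjectsIn_biproduct (S : AddSubmonoid ℂ) {J : Type} [Finite J] (f : J → A)
    (h : ∀ j, subobjectsIn Z S (f j)) : subobjectsIn Z S (⨁ f) := by
  have := hZ.subobjectsIn_isClosedUnderExtensions S
  have : (subobjectsIn Z S).ContainsZero :=
    ⟨⟨0, isZero_zero A, fun X u _ => by
      simp [hZ.eq_zero_of_isZero (IsZero.of_mono u (isZero_zero A))]⟩⟩
  exact (subobjectsIn Z S).prop_biproduct f h

end IsAdditive

end Additive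

section Semistable

theorem phase_le_phase_iff {A B : Type*} {Z : A → ℂ} {Z' : B → ℂ} {X : A} {Y : B} :
    phase Z X ≤ phase Z' Y ↔ (Z X).arg ≤ (Z' Y).arg :=
  div_le_div_iff_of_pos_right Real.pi_pos

theorem arg_eq_of_phase_eq {A : Type*} {Z : A → ℂ} {X Y : A} (h : phase Z X = phase Z Y) :
    (Z X).arg = (Z Y).arg :=
  (div_left_inj' Real.pi_ne_zero).mp h

variable {A : Type u} [Category.{v} A] [Abelian A] {Z : A → ℂ}

namespace IsStabilityFunction

variable (hZ : IsStabilityFunction Z)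
include hZ

theorem ne_zero_and_arg_pos {E : A} (hE : ¬ IsZero E) : Z E ≠ 0 ∧ 0 < (Z E).arg := by
  obtain ⟨r, φ, hr, hφ, hφ1, hZE⟩ := hZ.2 E hE
  have hexp : (Real.pi : ℂ) * φ * Complex.I = ((Real.pi * φ : ℝ) : ℂ) * Complex.I := by
    push_cast; ring
  rw [hZE, hexp, Complex.arg_real_mul _ hr, Complex.arg_exp_mul_I,
    (toIocMod_eq_self _).mpr ⟨by nlinarith [Real.pi_pos], by nlinarith [Real.pi_pos]⟩]
  exact ⟨mul_ne_zero (by exact_mod_cast hr.ne') (Complex.exp_ne_zero _), by positivity⟩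

theorem ne_zero {E : A} (hE : ¬ IsZero E) : Z E ≠ 0 := (hZ.ne_zero_and_arg_pos hE).1

theorem arg_pos {E : A} (hE : ¬ IsZero E) : 0 < (Z E).arg := (hZ.ne_zero_and_arg_pos hE).2

theorem comp {C : Type u₂} [Category.{v₂} C] [Abelian C] (F : C ⥤ A)
    [PreservesFiniteLimits F] [PreservesFiniteColimits F] [F.Faithful] :
    IsStabilityFunction (fun E => Z (F.obj E)) :=
  ⟨fun S hS => hZ.1 (S.map F) (hS.map_of_exact F),
    fun E hE => hZ.2 (F.obj E) fun h => hE (F.isZero_of_isZero_obj h)⟩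

end IsStabilityFunction

theorem IsSemistable.of_map {C : Type u₂} [Category.{v₂} C] [Abelian C] (F : C ⥤ A)
    [F.PreservesMonomorphisms] [F.PreservesZeroMorphisms] [F.Faithful] {E : C}
    (h : IsSemistable Z (F.obj E)) : IsSemistable (fun X => Z (F.obj X)) E :=
  ⟨fun hE => h.1 (F.map_isZero hE),
    fun X u _ hX => h.2 (F.obj X) (F.map u) inferInstance fun h => hX (F.isZero_of_isZero_obj h)⟩

theorem IsSemistable.subobjectsIn_upperSector (hZ : IsStabilityFunction Z) {E : A}
    (hE : IsSemistable Z E) {a : ℝ} (ha : (Z E).arg ≤ a) (haπ : a ≤ Real.pi) :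
    subobjectsIn Z (upperSector a) E := by
  intro X u _
  by_cases hX : IsZero X
  · rw [hZ.isAdditive.eq_zero_of_isZero hX]
    exact (upperSector a).zero_mem
  have hXE := phase_le_phase_iff.mp (hE.2 X u inferInstance hX)
  exact (mem_upperSector_iff ((hZ.arg_pos hX).trans_le (hXE.trans ha)) haπ (hZ.ne_zero hX)).mpr
    ⟨hZ.arg_pos hX, hXE.trans ha⟩

theorem isSemistable_of_subobjectsIn_upperSector (hZ : IsStabilityFunction Z) {E : A}
    (hE : ¬ IsZero E) {a : ℝ} (hsub : subobjectsIn Z (upperSector a) E) (ha : 0 < a)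
    (haE : a ≤ (Z E).arg) : IsSemistable Z E := by
  refine ⟨hE, fun X u _ hX => phase_le_phase_iff.mpr ?_⟩
  have hmem := (mem_upperSector_iff ha (haE.trans (Complex.arg_le_pi _)) (hZ.ne_zero hX)).mp
    (hsub u inferInstance)
  exact hmem.2.trans haE

end Semistable

section HarderNarasimhan

variable {A : Type u} [Category.{v} A] [Abelian A] {Z : A → ℂ} {E : A}

namespace HNFiltAb

theorem subobjectsIn_fil (h : HNFiltAb Z E) (hZ : IsStabilityFunction Z) (j : ℕ)
    (hj : j ≤ h.n) :
    subobjectsIn Z (upperSector (Z (cokernel (h.f ⟨0, h.npos⟩))).arg)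
      (h.Fil ⟨j, Nat.lt_succ_of_le hj⟩) := by
  induction j with
  | zero =>
    intro X u _
    rw [hZ.isAdditive.eq_zero_of_isZero (IsZero.of_mono u h.fil_zero)]
    exact AddSubmonoid.zero_mem _
  | succ j ih =>
    have := h.mono ⟨j, hj⟩
    have hT : (ShortComplex.mk (h.f ⟨j, hj⟩) (cokernel.π _) (cokernel.condition _)).ShortExact :=
      { exact := ShortComplex.exact_of_g_is_cokernel _ (cokernelIsCokernel _) }
    have hq : subobjectsIn Z (upperSector (Z (cokernel (h.f ⟨0, h.npos⟩))).arg)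
        (cokernel (h.f ⟨j, hj⟩)) :=
      (h.quot_ss _).subobjectsIn_upperSector hZ
        (phase_le_phase_iff.mp (h.quot_anti.antitone (Fin.mk_le_mk.mpr (Nat.zero_le j))))
        (Complex.arg_le_pi _)
    exact (hZ.isAdditive.subobjectsIn_isClosedUnderExtensions _).prop_X₂_of_shortExact hT
      (ih (Nat.le_of_succ_le hj)) hq

theorem exists_mono_fil_one (h : HNFiltAb Z E) (j : ℕ) (hj₁ : 1 ≤ j) (hj : j ≤ h.n) :
    ∃ m : h.Fil ⟨1, Nat.succ_lt_succ h.npos⟩ ⟶ h.Fil ⟨j, Nat.lt_succ_of_le hj⟩, Mono m := by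
  induction j, hj₁ using Nat.le_induction with
  | base => exact ⟨𝟙 _, inferInstance⟩
  | succ j hj₁ ih =>
    obtain ⟨m, _⟩ := ih (Nat.le_of_succ_le hj)
    have := h.mono ⟨j, hj⟩
    exact ⟨m ≫ h.f ⟨j, hj⟩, mono_comp _ _⟩

-- The witness is the first factor `E₁ ≅ E₁ / E₀`, the maximal destabilizing subobject.
theorem exists_maxDestabilizing (h : HNFiltAb Z E) (hZ : IsStabilityFunction Z) :
    ∃ (A₁ : A) (m : A₁ ⟶ E), Mono m ∧ IsSemistable Z A₁ ∧
      subobjectsIn Z (upperSector (Z A₁).arg) E := by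
  obtain ⟨eE⟩ := h.fil_last
  obtain ⟨m, _⟩ := h.exists_mono_fil_one h.n h.npos le_rfl
  have hf₀ : h.f ⟨0, h.npos⟩ = 0 := h.fil_zero.eq_of_src _ _
  let e₁ : cokernel (h.f ⟨0, h.npos⟩) ≅ h.Fil ⟨1, Nat.succ_lt_succ h.npos⟩ :=
    (cokernelIsoOfEq hf₀).trans cokernelZeroIsoTarget
  refine ⟨_, e₁.hom ≫ m ≫ eE.hom, inferInstance, h.quot_ss _, ?_⟩
  exact (subobjectsIn Z _).prop_of_iso eE (h.subobjectsIn_fil hZ h.n le_rfl)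

end HNFiltAb

end HarderNarasimhan

section PushPull

variable {C : Type u} [Category.{v} C] [Abelian C] {D : Type u₂} [Category.{v₂} D] [Abelian D]

theorem IsSemistable.arg_le_arg_of_mono {Z : D → ℂ} (hZ : IsStabilityFunction Z)
    (pstar : C ⥤ D) (hZC : IsStabilityFunction (fun X => Z (pstar.obj X)))
    (plow : D ⥤ C) [plow.PreservesMonomorphisms] {G : Type} [Finite G] [Nonempty G]
    (gst : G → D ⥤ D) {E : C} {A₁ : D} (hE : IsSemistable (fun X => Z (pstar.obj X)) E)
    (ppIso : plow.obj (pstar.obj E) ≅ ⨁ fun _ : G => E)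
    (qpIso : pstar.obj (plow.obj A₁) ≅ ⨁ fun g => (gst g).obj A₁)
    (hA₁ : ∀ g, IsSemistable Z ((gst g).obj A₁) ∧ phase Z ((gst g).obj A₁) = phase Z A₁)
    (m : A₁ ⟶ pstar.obj E) [Mono m] :
    (Z A₁).arg ≤ (Z (pstar.obj E)).arg := by
  obtain ⟨g₀⟩ := ‹Nonempty G›
  have hsum : subobjectsIn (fun X => Z (pstar.obj X)) (upperSector (Z (pstar.obj E)).arg)
      (⨁ fun _ : G => E) :=
    hZC.isAdditive.subobjectsIn_biproduct _ _ fun _ =>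
      hE.subobjectsIn_upperSector hZC le_rfl (Complex.arg_le_pi _)
  have hsector : Z (pstar.obj (plow.obj A₁)) ∈ upperSector (Z (pstar.obj E)).arg :=
    hsum (plow.map m ≫ ppIso.hom) inferInstance
  have hray : SameRay ℝ (Z (pstar.obj (plow.obj A₁))) (Z A₁) := by
    rw [hZ.isAdditive.eq_of_iso qpIso]
    exact hZ.isAdditive.valueIn_biproduct (sameRaySubmonoid (Z A₁)) _ fun g =>
      Complex.sameRay_iff.mpr (Or.inr (Or.inr (arg_eq_of_phase_eq (hA₁ g).2)))
  have hpW : Z (pstar.obj (plow.obj A₁)) ≠ 0 := hZ.ne_zero fun h =>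
    (hA₁ g₀).1.1 ((h.of_iso qpIso.symm).of_mono (biproduct.ι (fun g => (gst g).obj A₁) g₀))
  have hA₁pos : 0 < (Z A₁).arg :=
    arg_eq_of_phase_eq (hA₁ g₀).2 ▸ hZ.arg_pos (hA₁ g₀).1.1
  have harg : (Z (pstar.obj (plow.obj A₁))).arg = (Z A₁).arg := by
    rcases Complex.sameRay_iff.mp hray with h | h | h
    · exact absurd h hpW
    · simp [h] at hA₁pos
    · exact h
  rw [← harg]
  exact ((mem_upperSector_iff (hZC.arg_pos hE.1) (Complex.arg_le_pi _) hpW).mp hsector).2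

end PushPull

/-- Let `p^* : C → D` be an exact faithful functor of abelian
categories, `p_* : D → C` exact, and `G` a finite group of order `d` acting on `D` by
exact autoequivalences, with natural isomorphisms `p_* ∘ p^* ≅ (-)^{⊕d}` and
`p^* ∘ p_* ≅ ⊕_{g ∈ G} g^*`.  Let `Z` be a stability function on `D` with the
Harder–Narasimhan property whose semistable objects of any given phase are preserved
by every `g^*`.  Then `Z ∘ p^*` is a stability function on `C`, a nonzero object `E`
is `(Z ∘ p^*)`-semistable iff `p^* E` is `Z`-semistable, and in that case the phases
agree. -/
theorem statement_13
    {C : Type u} [Category.{v} C] [Abelian C] {D : Type u₂} [Category.{v₂} D] [Abelian D]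
    {G : Type} [Group G] [Fintype G]
    (pstar : C ⥤ D) [PreservesFiniteLimits pstar] [PreservesFiniteColimits pstar]
    [pstar.Faithful]
    (plow : D ⥤ C) [PreservesFiniteLimits plow] [PreservesFiniteColimits plow]
    (gst : G → D ⥤ D) [∀ g : G, PreservesFiniteLimits (gst g)]
    [∀ g : G, PreservesFiniteColimits (gst g)] [∀ g : G, (gst g).IsEquivalence]
    (actOne : gst 1 ≅ 𝟭 D) (actMul : ∀ g h : G, gst h ⋙ gst g ≅ gst (g * h))
    (ppIso : ∀ E : C, plow.obj (pstar.obj E) ≅ ⨁ (fun _ : G => E))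
    (ppNat : ∀ {E F : C} (f : E ⟶ F),
      plow.map (pstar.map f) ≫ (ppIso F).hom = (ppIso E).hom ≫ biproduct.map (fun _ => f))
    (qpIso : ∀ X : D, pstar.obj (plow.obj X) ≅ ⨁ (fun g : G => (gst g).obj X))
    (qpNat : ∀ {X Y : D} (f : X ⟶ Y),
      pstar.map (plow.map f) ≫ (qpIso Y).hom = (qpIso X).hom ≫ biproduct.map (fun g => (gst g).map f))
    (Z : D → ℂ) (hZ : IsStabilityFunction Z) (hHN : HNProperty Z)
    (hsemi : ∀ (g : G) (E : D), IsSemistable Z E →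
      IsSemistable Z ((gst g).obj E) ∧ phase Z ((gst g).obj E) = phase Z E) :
    IsStabilityFunction (fun E => Z (pstar.obj E)) ∧
    ∀ E : C, ¬ IsZero E →
      ((IsSemistable (fun X => Z (pstar.obj X)) E ↔ IsSemistable Z (pstar.obj E)) ∧
        (IsSemistable (fun X => Z (pstar.obj X)) E →
          phase (fun X => Z (pstar.obj X)) E = phase Z (pstar.obj E))) := by
  have hZC := hZ.comp pstar
  refine ⟨hZC, fun E hE => ⟨⟨fun hss => ?_, IsSemistable.of_map pstar⟩, fun _ => rfl⟩⟩
  have hpE : ¬ IsZero (pstar.obj E) := fun h => hE (pstar.isZero_of_isZero_obj h)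
  obtain ⟨hn⟩ := hHN _ hpE
  obtain ⟨A₁, m, _, hA₁, hsub⟩ := hn.exists_maxDestabilizing hZ
  exact isSemistable_of_subobjectsIn_upperSector hZ hpE hsub (hZ.arg_pos hA₁.1)
    (hss.arg_le_arg_of_mono hZ pstar hZC plow gst (ppIso E) (qpIso A₁)
      (fun g => hsemi g A₁ hA₁) m)

end StabilityPaper
end
end

section
/- In the Galois setup: (i) for every σ = (Z,P) ∈ Stab(T_L)_p and every group homomorphism U : K(T_L) → ℂ, one has ‖U∘K(p^*)‖_{p_*σ} ≤ ‖U‖_σ in [0,∞]; (ii) for every σ′ = (Z′,P′) ∈ Stab(T) such that the pullback pair p^*σ′ is a locally finite stability condition on T_L, and every group homomorphism U′ : K(T) → ℂ, one has ‖U′∘K(p_*)‖_{p^*σ′} ≤ ‖U′‖_{σ′} in [0,∞]. -/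
open CategoryTheory Limits Pretriangulated ENNReal

noncomputable section

namespace StabilityPaper

universe v u v₂ u₂ v₃ u₃

/-!
A semistable object `E` of the pushforward pair `(Z ∘ p, p⁻¹ P)` is by definition one whose
image `p E` is semistable for `(Z, P)`, and both pairs give `E` the central charge `Z (p E)`.
So every ratio `|U (p E)| / |Z (p E)|` bounding the left-hand norm already occurs in the
right-hand one, unless `p E` is zero; then `Z (p E) = 0` by additivity and the ratio is
`x / 0 = 0`.
-/

section Norm

variable {D : Type u₂} [Category.{v₂} D] [Preadditive D] [HasZeroObject D] [HasShift D ℤ]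
  [∀ n : ℤ, (shiftFunctor D n).Additive] [Pretriangulated D]

theorem AdditiveOnTriangles.eq_zero_of_isZero_s16 {Z : D → ℂ} (hZ : AdditiveOnTriangles Z)
    {X : D} (hX : IsZero X) : Z X = 0 := by
  have hT : Triangle.mk (0 : X ⟶ X) (0 : X ⟶ X) 0 ∈ distTriang D :=
    isomorphic_distinguished _ (contractible_distinguished X) _ <|
      Triangle.isoMk _ _ (Iso.refl X) (Iso.refl X) (hX.iso (isZero_zero D))
        (hX.eq_of_src _ _) (hX.eq_of_src _ _) (hX.eq_of_src _ _)
  have h : Z X = Z X + Z X := hZ _ hT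
  linear_combination -h

theorem stabNorm_pushforward_le {C : Type u} [Category.{v} C] (p : C ⥤ D) (σ : PreStab D)
    (hZ : AdditiveOnTriangles σ.Z) (U : D → ℂ) :
    stabNorm (pushforward p σ) (fun E => U (p.obj E)) ≤ stabNorm σ U := by
  refine iSup_le fun ⟨E, _, φ, hφ⟩ => ?_
  by_cases hpE : IsZero (p.obj E)
  · have hZE : σ.Z (p.obj E) = 0 := hZ.eq_zero_of_isZero_s16 hpE
    simp [pushforward, hZE]
  · exact le_iSup_of_le
      (⟨p.obj E, hpE, φ, hφ⟩ : {X : D // ¬ IsZero X ∧ ∃ φ : ℝ, X ∈ σ.P φ}) le_rfl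

end Norm

/-- In the Galois setup: (i) for every `σ ∈ Stab(T_L)_p` and every
group homomorphism `U : K(T_L) → ℂ` one has `‖U ∘ K(p^*)‖_{p_* σ} ≤ ‖U‖_σ`;
(ii) for every `σ' ∈ Stab(T)` whose pullback pair is a locally finite stability
condition and every group homomorphism `U' : K(T) → ℂ` one has
`‖U' ∘ K(p_*)‖_{p^* σ'} ≤ ‖U'‖_{σ'}`. -/
theorem statement_16
    {C₁ : Type u} [Category.{v} C₁] [Preadditive C₁] [HasZeroObject C₁] [HasShift C₁ ℤ]
    [∀ n : ℤ, (shiftFunctor C₁ n).Additive] [Pretriangulated C₁] [HasFiniteBiproducts C₁]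
    {C₂ : Type u₂} [Category.{v₂} C₂] [Preadditive C₂] [HasZeroObject C₂] [HasShift C₂ ℤ]
    [∀ n : ℤ, (shiftFunctor C₂ n).Additive] [Pretriangulated C₂] [HasFiniteBiproducts C₂]
    {G : Type} [Group G] [Fintype G]
    (pstar : C₁ ⥤ C₂) [pstar.CommShift ℤ] [pstar.IsTriangulated]
    (plow : C₂ ⥤ C₁) [plow.CommShift ℤ] [plow.IsTriangulated]
    (gst : G → C₂ ⥤ C₂) [∀ g : G, (gst g).CommShift ℤ] [∀ g : G, (gst g).IsTriangulated]
    [∀ g : G, (gst g).IsEquivalence]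
    (actOne : gst 1 ≅ 𝟭 C₂) (actMul : ∀ g h : G, gst h ⋙ gst g ≅ gst (g * h))
    (pIso : ∀ g : G, pstar ≅ pstar ⋙ gst g)
    (pIsoCocycle : ∀ (g h : G) (E : C₁), (pIso (g * h)).hom.app E =
      (pIso g).hom.app E ≫ (gst g).map ((pIso h).hom.app E) ≫ (actMul g h).hom.app (pstar.obj E))
    (qIso : ∀ g : G, gst g ⋙ plow ≅ plow)
    (ppIso : ∀ E : C₁, plow.obj (pstar.obj E) ≅ ⨁ (fun _ : G => E))
    (ppNat : ∀ {E F : C₁} (f : E ⟶ F),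
      plow.map (pstar.map f) ≫ (ppIso F).hom = (ppIso E).hom ≫ biproduct.map (fun _ => f))
    (qpIso : ∀ X : C₂, pstar.obj (plow.obj X) ≅ ⨁ (fun g : G => (gst g).obj X))
    (qpNat : ∀ {X Y : C₂} (f : X ⟶ Y),
      pstar.map (plow.map f) ≫ (qpIso Y).hom = (qpIso X).hom ≫ biproduct.map (fun g => (gst g).map f))
 :
    (∀ σ : Stab C₂, IsStabilityCondition (pushforward pstar σ.1) →
      ∀ U : C₂ → ℂ, AdditiveOnTriangles U →
        stabNorm (pushforward pstar σ.1) (fun E => U (pstar.obj E)) ≤ stabNorm σ.1 U) ∧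
    (∀ σ' : Stab C₁, IsStabilityCondition (pushforward plow σ'.1) →
      ∀ U' : C₁ → ℂ, AdditiveOnTriangles U' →
        stabNorm (pushforward plow σ'.1) (fun E => U' (plow.obj E)) ≤ stabNorm σ'.1 U') :=
  ⟨fun σ _ U _ => stabNorm_pushforward_le pstar σ.1 σ.2.1.zadd U,
    fun σ' _ U' _ => stabNorm_pushforward_le plow σ'.1 σ'.2.1.zadd U'⟩

end StabilityPaper
end
end
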